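/- arXiv:0801.1717 — 4 statements merged into one kernel-verified Lean document; each statement's English description precedes it below -/
import Mathlib

section
/- Let X be a Lindelöf space, Y a μ-complete q-space, and F : K(X) → K(Y) any map. Let U ⊆ X be functionally open (a cozero set) and V ⊆ Y open such that V is F-covered by U. Then for every open cover W of U and every point y ∈ V there exist a neighborhood V_y of y and a finite subfamily E ⊆ W such that V_y is F-covered by ⋃E. -/
open Set Filter Topology

universe u v

/-- A subset `A` of `Y` is bounded: every continuous real-valued function on `Y`
is bounded on `A`. -/
def BoundedSubset {Y : Type v} [TopologicalSpace Y] (A : Set Y) : Prop :=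
  ∀ f : Y → ℝ, Continuous f → ∃ M : ℝ, ∀ a ∈ A, |f a| ≤ M

/-- A μ-space (μ-complete space): every closed bounded subset is compact. -/
def MuSpace (Y : Type v) [TopologicalSpace Y] : Prop :=
  ∀ A : Set Y, IsClosed A → BoundedSubset A → IsCompact A

/-- A q-space: every point has a sequence of neighborhoods such that any choice of
points from them has a cluster point. -/
def QSpace (Y : Type v) [TopologicalSpace Y] : Prop :=
  ∀ y : Y, ∃ U : ℕ → Set Y, (∀ n, U n ∈ nhds y) ∧
    ∀ z : ℕ → Y, (∀ n, z n ∈ U n) → ∃ p : Y, MapClusterPt p atTop z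

/-- A wq-space: every point has a sequence of neighborhoods such that any choice of
points from them forms a bounded set. -/
def WqSpace (Y : Type v) [TopologicalSpace Y] : Prop :=
  ∀ y : Y, ∃ U : ℕ → Set Y, (∀ n, U n ∈ nhds y) ∧
    ∀ z : ℕ → Y, (∀ n, z n ∈ U n) → BoundedSubset (Set.range z)

/-- Condition (1): `F` is monotone on compact sets. -/
def CondMonotone {X : Type u} {Y : Type v} [TopologicalSpace X] [TopologicalSpace Y]
    (F : Set X → Set Y) : Prop :=
  ∀ K L : Set X, IsCompact K → IsCompact L → K ⊆ L → F K ⊆ F L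

/-- Condition (2): cofinality. -/
def CondCofinal {X : Type u} {Y : Type v} [TopologicalSpace X] [TopologicalSpace Y]
    (F : Set X → Set Y) : Prop :=
  ∀ L : Set Y, IsCompact L → ∃ K : Set X, IsCompact K ∧ L ⊆ F K

/-- Condition (2)_c: countable cofinality. -/
def CondCofinalCtble {X : Type u} {Y : Type v} [TopologicalSpace X] [TopologicalSpace Y]
    (F : Set X → Set Y) : Prop :=
  ∀ L : Set Y, IsCompact L → L.Countable → ∃ K : Set X, IsCompact K ∧ L ⊆ F K

/-- Condition (3)_c. -/
def Cond3c {X : Type u} {Y : Type v} [TopologicalSpace X] [TopologicalSpace Y]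
    (F : Set X → Set Y) : Prop :=
  ∀ (U : Set X) (V : Set Y), IsOpen U → IsOpen V → U.Nonempty → V.Nonempty →
    (∀ L : Set Y, IsCompact L → L.Countable → L ⊆ V →
      ∃ K : Set X, IsCompact K ∧ K ⊆ U ∧ L ⊆ F K) →
    ∀ W : Set (Set X), (∀ w ∈ W, IsOpen w) → U ⊆ ⋃₀ W →
      ∀ y ∈ V, ∃ E : Set (Set X), E ⊆ W ∧ E.Finite ∧
        ∃ Vy ∈ nhds y, ∀ L : Set Y, IsCompact L → L.Countable → L ⊆ Vy →
          ∃ K : Set X, IsCompact K ∧ K ⊆ ⋃₀ E ∧ L ⊆ F K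

/-- Condition (3). -/
def Cond3 {X : Type u} {Y : Type v} [TopologicalSpace X] [TopologicalSpace Y]
    (F : Set X → Set Y) : Prop :=
  ∀ (U : Set X) (V : Set Y), IsOpen U → IsOpen V → U.Nonempty → V.Nonempty →
    (∀ L : Set Y, IsCompact L → L ⊆ V →
      ∃ K : Set X, IsCompact K ∧ K ⊆ U ∧ L ⊆ F K) →
    ∀ W : Set (Set X), (∀ w ∈ W, IsOpen w) → U ⊆ ⋃₀ W →
      ∀ y ∈ V, ∃ E : Set (Set X), E ⊆ W ∧ E.Finite ∧
        ∃ Vy ∈ nhds y, ∀ L : Set Y, IsCompact L → L ⊆ Vy →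
          ∃ K : Set X, IsCompact K ∧ K ⊆ ⋃₀ E ∧ L ⊆ F K

/-- Condition (3'). -/
def Cond3' {X : Type u} {Y : Type v} [TopologicalSpace X] [TopologicalSpace Y]
    (F : Set X → Set Y) : Prop :=
  ∀ W : Set (Set X), (∀ w ∈ W, IsOpen w) → ⋃₀ W = Set.univ →
    ∀ y : Y, ∃ E : Set (Set X), E ⊆ W ∧ E.Finite ∧
      ∃ Vy ∈ nhds y, ∀ L : Set Y, IsCompact L → L ⊆ Vy →
        ∃ K : Set X, IsCompact K ∧ K ⊆ ⋃₀ E ∧ L ⊆ F K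

/-- `F : S(X) → 2^Y` is set tri-quotient: there is an assignment `s` of open subsets of `Y`
to open subsets of `X` satisfying (str1)-(str4). -/
def SetTriQuotient {X : Type u} {Y : Type v} [TopologicalSpace X] [TopologicalSpace Y]
    (S : Set (Set X)) (F : Set X → Set Y) : Prop :=
  ∃ s : Set X → Set Y,
    (∀ U : Set X, IsOpen U → IsOpen (s U)) ∧
    (∀ U : Set X, IsOpen U → s U ⊆ ⋃ K ∈ {K | K ∈ S ∧ K ⊆ U}, F K) ∧
    s Set.univ = Set.univ ∧
    (∀ U V : Set X, IsOpen U → IsOpen V → U ⊆ V → s U ⊆ s V) ∧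
    (∀ U : Set X, IsOpen U → ∀ y ∈ s U, ∀ W : Set (Set X), (∀ w ∈ W, IsOpen w) →
      (⋃ K ∈ {K | K ∈ S ∧ y ∈ F K ∧ K ⊆ U}, K) ⊆ ⋃₀ W →
      ∃ E : Set (Set X), E ⊆ W ∧ E.Finite ∧ y ∈ s (⋃₀ E))

/-- A sieve on `X`: a sequence of open covers indexed by `A n`, linked by maps `π n`. -/
def IsSieve {X : Type u} [TopologicalSpace X] {A : ℕ → Type v}
    (U : ∀ n, A n → Set X) (π : ∀ n, A (n + 1) → A n) : Prop :=
  (∀ n (a : A n), IsOpen (U n a)) ∧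
  (∀ n, (⋃ a : A n, U n a) = Set.univ) ∧
  (∀ n (a : A n), U n a = ⋃ b ∈ {b : A (n + 1) | π n b = a}, U (n + 1) b)

/-- A π-chain for a sieve. -/
def IsPiChain {A : ℕ → Type v} (π : ∀ n, A (n + 1) → A n) (α : ∀ n, A n) : Prop :=
  ∀ n, π n (α (n + 1)) = α n

/-- A filter base on `X`. -/
def IsFilterBase {X : Type u} (B : Set (Set X)) : Prop :=
  B.Nonempty ∧ (∀ P ∈ B, P.Nonempty) ∧ ∀ P ∈ B, ∀ Q ∈ B, ∃ R ∈ B, R ⊆ P ∩ Q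

/-- A complete sieve: for every π-chain, every filter base meshing with the chain
has a cluster point. -/
def IsCompleteSieve {X : Type u} [TopologicalSpace X] {A : ℕ → Type v}
    (U : ∀ n, A n → Set X) (π : ∀ n, A (n + 1) → A n) : Prop :=
  IsSieve U π ∧
  ∀ α : ∀ n, A n, IsPiChain π α →
    ∀ B : Set (Set X), IsFilterBase B →
      (∀ P ∈ B, ∀ n, (P ∩ U n (α n)).Nonempty) →
      ∃ x : X, ∀ P ∈ B, x ∈ closure P

/-- A finitely additive sieve. -/
def IsFinitelyAdditiveSieve {X : Type u} [TopologicalSpace X] {A : ℕ → Type v}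
    (U : ∀ n, A n → Set X) (π : ∀ n, A (n + 1) → A n) : Prop :=
  (∀ n (a b : A n), ∃ c : A n, U n c = U n a ∪ U n b) ∧
  (∀ n (a : A n) (b b' : A (n + 1)), π n b = a → π n b' = a →
    ∃ c : A (n + 1), π n c = a ∧ U (n + 1) c = U (n + 1) b ∪ U (n + 1) b')

/-- A strong sieve. -/
def IsStrongSieve {X : Type u} [TopologicalSpace X] {A : ℕ → Type v}
    (U : ∀ n, A n → Set X) (π : ∀ n, A (n + 1) → A n) : Prop :=
  ∀ n (b : A (n + 1)), closure (U (n + 1) b) ⊆ U n (π n b)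

/-- A sieve-complete space: one admitting a complete sieve. -/
def SieveComplete (X : Type u) [TopologicalSpace X] : Prop :=
  ∃ (A : ℕ → Type u) (U : ∀ n, A n → Set X) (π : ∀ n, A (n + 1) → A n),
    IsCompleteSieve U π

/-- The hyperspace of compact subsets of `X`. -/
def KSet (X : Type u) [TopologicalSpace X] : Type u := {K : Set X // IsCompact K}

/-- The upper Vietoris topology on the hyperspace of compact sets. -/
def upperVietoris (X : Type u) [TopologicalSpace X] : TopologicalSpace (KSet X) :=
  TopologicalSpace.generateFrom
    {S : Set (KSet X) | ∃ U : Set X, IsOpen U ∧ S = {K : KSet X | K.1 ⊆ U}}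

/-- An usco map: nonempty compact values and upper semicontinuous. -/
def IsUsco {Z : Type u} {Y : Type v} [TopologicalSpace Z] [TopologicalSpace Y]
    (Φ : Z → Set Y) : Prop :=
  (∀ z, (Φ z).Nonempty) ∧ (∀ z, IsCompact (Φ z)) ∧
  ∀ z : Z, ∀ V : Set Y, IsOpen V → Φ z ⊆ V → ∃ O ∈ nhds z, ∀ z' ∈ O, Φ z' ⊆ V

/-- A wq-map. -/
def WqMap {Z : Type u} {Y : Type v} [TopologicalSpace Z] [TopologicalSpace Y]
    (F : Z → Set Y) : Prop :=
  ∀ z : Z, ∃ U : ℕ → Set Z, (∀ n, U n ∈ nhds z) ∧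
    ∀ w : ℕ → Z, (∀ n, w n ∈ U n) → IsCompact (closure (⋃ n, F (w n)))

/-- `A ⊆ Y` is `F`-covered by `B ⊆ X`. -/
def FCovered {X : Type u} {Y : Type v} [TopologicalSpace X] [TopologicalSpace Y]
    (F : Set X → Set Y) (A : Set Y) (B : Set X) : Prop :=
  ∀ L : Set Y, IsCompact L → L ⊆ A → ∃ K : Set X, IsCompact K ∧ K ⊆ B ∧ L ⊆ F K

/-- The Lindelöf number of a space. -/
noncomputable def lindelofNumber (X : Type u) [TopologicalSpace X] : Cardinal.{u} :=
  sInf {κ : Cardinal.{u} | Cardinal.aleph0 ≤ κ ∧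
    ∀ 𝒰 : Set (Set X), (∀ U ∈ 𝒰, IsOpen U) → ⋃₀ 𝒰 = Set.univ →
      ∃ 𝒱 : Set (Set X), 𝒱 ⊆ 𝒰 ∧ Cardinal.mk 𝒱 ≤ κ ∧ ⋃₀ 𝒱 = Set.univ}

/-- The density of a space: the least cardinality of a dense subset. -/
noncomputable def densityCard (X : Type u) [TopologicalSpace X] : Cardinal.{u} :=
  sInf {κ : Cardinal.{u} | ∃ D : Set X, Dense D ∧ Cardinal.mk D = κ}

/-- Čech-completeness: `X` is a Gδ subset of its Stone–Čech compactification. -/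
def CechComplete (X : Type u) [TopologicalSpace X] : Prop :=
  ∃ G : ℕ → Set (StoneCech X), (∀ n, IsOpen (G n)) ∧
    Set.range (stoneCechUnit : X → StoneCech X) = ⋂ n, G n

/-- Complete metrizability of a topological space. -/
def CompletelyMetrizable (X : Type u) [t : TopologicalSpace X] : Prop :=
  ∃ m : MetricSpace X, m.toPseudoMetricSpace.toUniformSpace.toTopologicalSpace = t ∧
    @CompleteSpace X m.toPseudoMetricSpace.toUniformSpace

/-- A generalized tri-quotient set-valued map. -/
def GenTriQuotient {X : Type u} {Y : Type v} [TopologicalSpace X] [TopologicalSpace Y]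
    (F : X → Set Y) : Prop :=
  ∃ t : Set X → Set Y,
    (∀ U : Set X, IsOpen U → IsOpen (t U)) ∧
    (∀ U : Set X, IsOpen U → t U ⊆ ⋃ x ∈ U, F x) ∧
    t Set.univ = Set.univ ∧
    (∀ U V : Set X, IsOpen U → IsOpen V → U ⊆ V → t U ⊆ t V) ∧
    (∀ U : Set X, IsOpen U → ∀ y ∈ t U, ∀ W : Set (Set X), (∀ w ∈ W, IsOpen w) →
      {x ∈ U | y ∈ F x} ⊆ ⋃₀ W →
      ∃ E : Set (Set X), E ⊆ W ∧ E.Finite ∧ y ∈ t (⋃₀ E))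

/-- A (single-valued, continuous) tri-quotient map. -/
def TriQuotient {X : Type u} {Y : Type v} [TopologicalSpace X] [TopologicalSpace Y]
    (f : X → Y) : Prop :=
  Continuous f ∧ Function.Surjective f ∧
  ∃ t : Set X → Set Y,
    (∀ U : Set X, IsOpen U → IsOpen (t U)) ∧
    (∀ U : Set X, IsOpen U → t U ⊆ f '' U) ∧
    t Set.univ = Set.univ ∧
    (∀ U V : Set X, IsOpen U → IsOpen V → U ⊆ V → t U ⊆ t V) ∧
    (∀ U : Set X, IsOpen U → ∀ y ∈ t U, ∀ W : Set (Set X), (∀ w ∈ W, IsOpen w) →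
      f ⁻¹' {y} ∩ U ⊆ ⋃₀ W →
      ∃ E : Set (Set X), E ⊆ W ∧ E.Finite ∧ y ∈ t (⋃₀ E))

/-- The topology of pointwise convergence on `C(Y, F)`. -/
def CpTopology (Y F : Type*) [TopologicalSpace Y] [TopologicalSpace F] :
    TopologicalSpace C(Y, F) :=
  TopologicalSpace.induced (fun (f : C(Y, F)) (y : Y) => f y) Pi.topologicalSpace


/-- Claim 2.3: Let `X` be Lindelöf, `Y` a μ-complete q-space, `U ⊆ X` functionally open
and `V ⊆ Y` open with `V` `F`-covered by `U`. Then for every open cover `W` of `U` and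
every `y ∈ V` there are a neighborhood `V_y` of `y` and a finite `E ⊆ W` such that
`V_y` is `F`-covered by `⋃E`. -/
theorem stmt10 {X : Type u} {Y : Type v} [TopologicalSpace X] [TopologicalSpace Y]
    [T35Space X] [T35Space Y] [LindelofSpace X]
    (hYmu : MuSpace Y) (hYq : QSpace Y)
    (F : Set X → Set Y) (hFK : ∀ K : Set X, IsCompact K → IsCompact (F K))
    (U : Set X) (g : X → ℝ) (hg : Continuous g) (hUg : U = {x : X | g x ≠ 0})
    (V : Set Y) (hV : IsOpen V) (hcov : FCovered F V U)
    (W : Set (Set X)) (hW : ∀ w ∈ W, IsOpen w) (hWU : U ⊆ ⋃₀ W)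
    (y : Y) (hy : y ∈ V) :
    ∃ Vy ∈ nhds y, ∃ E : Set (Set X), E ⊆ W ∧ E.Finite ∧ FCovered F Vy (⋃₀ E) := by
  classical
  -- trivial case: U empty
  by_cases hUe : U = ∅
  · refine ⟨V, hV.mem_nhds hy, ∅, empty_subset _, finite_empty, ?_⟩
    intro L hL hLV
    obtain ⟨K, hK, hKU, hLF⟩ := hcov L hL hLV
    have hKe : K = ∅ := subset_empty_iff.mp (hUe ▸ hKU)
    exact ⟨K, hK, by simp [hKe], hLF⟩
  -- countable subfamily of W covering U
  have hW' : ∃ W' : Set (Set X), W' ⊆ W ∧ W'.Countable ∧ U ⊆ ⋃₀ W' := by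
    have hCsub : ∀ n : ℕ, {x : X | ((n : ℝ) + 1)⁻¹ ≤ |g x|} ⊆ U := by
      intro n x hx
      rw [hUg]
      intro hgx
      rw [Set.mem_setOf_eq, hgx, abs_zero] at hx
      have h0 : (0 : ℝ) < ((n : ℝ) + 1)⁻¹ := by positivity
      linarith
    have key : ∀ n : ℕ, ∃ r : Set ↥W, r.Countable ∧
        {x : X | ((n : ℝ) + 1)⁻¹ ≤ |g x|} ⊆ ⋃ w ∈ r, (w : Set X) := by
      intro n
      have hcl : IsClosed {x : X | ((n : ℝ) + 1)⁻¹ ≤ |g x|} :=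
        isClosed_le continuous_const hg.abs
      refine hcl.isLindelof.elim_countable_subcover (fun w : ↥W => (w : Set X))
        (fun w => hW w w.2) ?_
      intro x hx
      obtain ⟨w, hwW, hxw⟩ := hWU (hCsub n hx)
      exact mem_iUnion.mpr ⟨⟨w, hwW⟩, hxw⟩
    choose r hrc hrs using key
    refine ⟨⋃ n, (fun w : ↥W => (w : Set X)) '' r n, ?_,
      countable_iUnion (fun n => (hrc n).image _), ?_⟩
    · rintro w hw
      obtain ⟨n, hn⟩ := mem_iUnion.mp hw
      obtain ⟨w', _, rfl⟩ := hn
      exact w'.2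
    · intro x hx
      have hgx : g x ≠ 0 := by rw [hUg] at hx; exact hx
      have h0 : (0 : ℝ) < |g x| := abs_pos.mpr hgx
      obtain ⟨n, hn⟩ := exists_nat_one_div_lt h0
      have hxC : x ∈ {x : X | ((n : ℝ) + 1)⁻¹ ≤ |g x|} := by
        rw [Set.mem_setOf_eq, ← one_div]
        exact le_of_lt hn
      obtain ⟨w, hwr, hxw⟩ := mem_iUnion₂.mp (hrs n hxC)
      exact ⟨(w : Set X), mem_iUnion.mpr ⟨n, mem_image_of_mem _ hwr⟩, hxw⟩
  obtain ⟨W', hW'W, hW'c, hUW'⟩ := hW'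
  have hW'ne : W'.Nonempty := by
    obtain ⟨x, hx⟩ := Set.nonempty_iff_ne_empty.mpr hUe
    obtain ⟨w, hw, _⟩ := hUW' hx
    exact ⟨w, hw⟩
  obtain ⟨e, he⟩ := hW'c.exists_eq_range hW'ne
  -- complete regularity at y inside V
  obtain ⟨f, hf, hfy, hfV⟩ :=
    CompletelyRegularSpace.completely_regular y Vᶜ hV.isClosed_compl (by simpa using hy)
  have hfr : Continuous (fun z => (f z : ℝ)) := continuous_subtype_val.comp hf
  have hOopen : IsOpen {z : Y | (f z : ℝ) < 1 / 2} := isOpen_lt hfr continuous_const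
  have hyO : y ∈ {z : Y | (f z : ℝ) < 1 / 2} := by
    simp only [Set.mem_setOf_eq, hfy]
    norm_num
  have hDV : {z : Y | (f z : ℝ) ≤ 1 / 2} ⊆ V := by
    intro z hz
    by_contra hzV
    have : f z = 1 := hfV hzV
    rw [Set.mem_setOf_eq, this] at hz
    norm_num at hz
  -- q-space neighborhoods
  obtain ⟨Q, hQn, hQc⟩ := hYq y
  set Vn : ℕ → Set Y :=
    fun n => (⋂ k ∈ Finset.range (n + 1), Q k) ∩ {z : Y | (f z : ℝ) < 1 / 2} with hVndef
  have hVnnhds : ∀ n, Vn n ∈ nhds y := by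
    intro n
    exact Filter.inter_mem ((Filter.biInter_finset_mem _).mpr fun k _ => hQn k)
      (hOopen.mem_nhds hyO)
  have hVnQ : ∀ {n m : ℕ}, n ≤ m → Vn m ⊆ Q n := by
    intro n m hnm z hz
    have := hz.1
    simp only [Set.mem_iInter] at this
    exact this n (Finset.mem_range.mpr (Nat.lt_succ_of_le hnm))
  -- suppose the conclusion fails
  by_contra hcon
  push_neg at hcon
  simp only [FCovered, not_forall] at hcon
  have hL : ∀ n : ℕ, ∃ L : Set Y, IsCompact L ∧ L ⊆ Vn n ∧
      ∀ K : Set X, IsCompact K → K ⊆ ⋃₀ (e '' Set.Iio n) → ¬ L ⊆ F K := by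
    intro n
    have hEsub : e '' Set.Iio n ⊆ W := by
      intro w hw
      obtain ⟨k, _, rfl⟩ := hw
      exact hW'W (he ▸ Set.mem_range_self k)
    obtain ⟨L, hL⟩ := hcon (Vn n) (hVnnhds n) (e '' Set.Iio n) hEsub
      ((Set.finite_Iio n).image e)
    push_neg at hL
    obtain ⟨hLc, hLV, hLK⟩ := hL
    exact ⟨L, hLc, hLV, fun K hKc hKE hLF => (hLK K hKc hKE hLF).elim⟩
  choose L hLc hLV hLK using hL
  -- the union of the L n is bounded
  have hAb : BoundedSubset (⋃ n, L n) := by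
    intro h hc
    by_contra hb
    push_neg at hb
    have key : ∀ n : ℕ, ∃ a, a ∈ Q n ∧ (n : ℝ) < |h a| := by
      intro n
      have hScomp : IsCompact (⋃ m ∈ Set.Iio (n + 1), L m) :=
        Set.Finite.isCompact_biUnion (Set.finite_Iio (n + 1)) (fun m _ => hLc m)
      obtain ⟨C, hC⟩ := hScomp.exists_bound_of_continuousOn hc.continuousOn
      obtain ⟨a, ha, hha⟩ := hb (max C n)
      obtain ⟨m, ham⟩ := mem_iUnion.mp ha
      have hmn : n < m := by
        by_contra hle
        push_neg at hle
        have haS : a ∈ ⋃ m ∈ Set.Iio (n + 1), L m :=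
          mem_biUnion (Set.mem_Iio.mpr (Nat.lt_succ_of_le hle)) ham
        have := hC a haS
        rw [Real.norm_eq_abs] at this
        have hCm : C ≤ max C (n : ℝ) := le_max_left _ _
        linarith
      refine ⟨a, hVnQ (le_of_lt hmn) (hLV m ham), ?_⟩
      exact lt_of_le_of_lt (le_max_right C (n : ℝ)) hha
    choose z hzQ hzh using key
    obtain ⟨p, hp⟩ := hQc z hzQ
    rw [mapClusterPt_iff_frequently] at hp
    have hnb : {w : Y | |h w| < |h p| + 1} ∈ nhds p := by
      have hop : IsOpen {w : Y | |h w| < |h p| + 1} := isOpen_lt hc.abs continuous_const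
      exact hop.mem_nhds (by simp only [Set.mem_setOf_eq]; linarith)
    obtain ⟨n, hn1, hn2⟩ :=
      ((hp _ hnb).and_eventually (Filter.eventually_ge_atTop ⌈|h p| + 1⌉₊)).exists
    have h1 : (n : ℝ) < |h (z n)| := hzh n
    have h2 : |h p| + 1 ≤ (n : ℝ) := Nat.ceil_le.mp hn2
    have h3 : |h (z n)| < |h p| + 1 := hn1
    linarith
  -- the closure is compact and lies in V
  have hclb : BoundedSubset (closure (⋃ n, L n)) := by
    intro h hc
    obtain ⟨M, hM⟩ := hAb h hc
    refine ⟨M, fun a ha => ?_⟩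
    have hsub : closure (⋃ n, L n) ⊆ {w : Y | |h w| ≤ M} :=
      closure_minimal (fun w hw => hM w hw) (isClosed_le hc.abs continuous_const)
    exact hsub ha
  have hCLc : IsCompact (closure (⋃ n, L n)) := hYmu _ isClosed_closure hclb
  have hCLV : closure (⋃ n, L n) ⊆ V := by
    have hDcl : IsClosed {z : Y | (f z : ℝ) ≤ 1 / 2} := isClosed_le hfr continuous_const
    refine subset_trans (closure_minimal ?_ hDcl) hDV
    intro a ha
    obtain ⟨m, ham⟩ := mem_iUnion.mp ha
    have h2 : (f a : ℝ) < 1 / 2 := (hLV m ham).2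
    exact le_of_lt h2
  -- apply F-coveredness and get a contradiction
  obtain ⟨K, hKc, hKU, hCLF⟩ := hcov _ hCLc hCLV
  have hKcover : K ⊆ ⋃ k, e k := by
    intro x hx
    have := hUW' (hKU hx)
    rw [he] at this
    obtain ⟨w, ⟨k, rfl⟩, hxw⟩ := this
    exact mem_iUnion.mpr ⟨k, hxw⟩
  have heopen : ∀ k, IsOpen (e k) := fun k =>
    hW _ (hW'W (he ▸ Set.mem_range_self k))
  obtain ⟨t, ht⟩ := hKc.elim_finite_subcover e heopen hKcover
  set N := t.sup id + 1 with hNdef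
  have hKE : K ⊆ ⋃₀ (e '' Set.Iio N) := by
    intro x hx
    obtain ⟨k, hkt, hxk⟩ := mem_iUnion₂.mp (ht hx)
    refine ⟨e k, mem_image_of_mem e ?_, hxk⟩
    have : k ≤ t.sup id := Finset.le_sup (f := id) hkt
    exact Set.mem_Iio.mpr (Nat.lt_succ_of_le this)
  exact hLK N K hKc hKE
    (subset_trans (subset_trans (subset_iUnion L N) subset_closure) hCLF)
end

section
/- Let X and Y be arbitrary (completely regular) spaces. Then any map F : K(X) → K(Y) satisfying conditions (1), (2)_c and (3)_c is a monotone set tri-quotient map. -/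
open Set Filter Topology

universe u v

/-- Proposition 2.4: for arbitrary spaces `X`, `Y`, any map `F : K(X) → K(Y)` satisfying
(1), (2)_c and (3)_c is monotone set tri-quotient. -/
theorem stmt11 {X : Type u} {Y : Type v} [TopologicalSpace X] [TopologicalSpace Y]
    [T35Space X] [T35Space Y]
    (F : Set X → Set Y) (hFK : ∀ K : Set X, IsCompact K → IsCompact (F K))
    (h1 : CondMonotone F) (h2 : CondCofinalCtble F) (h3 : Cond3c F) :
    CondMonotone F ∧ SetTriQuotient {K : Set X | IsCompact K} F := by
  refine ⟨h1, ?_⟩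
  set s : Set X → Set Y := fun U =>
    {y | ∃ V ∈ nhds y, ∀ L : Set Y, IsCompact L → L.Countable → L ⊆ V →
      ∃ K : Set X, IsCompact K ∧ K ⊆ U ∧ L ⊆ F K} with hs
  refine ⟨s, ?_, ?_, ?_, ?_, ?_⟩
  · -- openness
    intro U _
    rw [isOpen_iff_mem_nhds]
    rintro y ⟨V, hV, hP⟩
    refine Filter.mem_of_superset (interior_mem_nhds.mpr hV) ?_
    intro y' hy'
    exact ⟨interior V, isOpen_interior.mem_nhds hy',
      fun L hL hLc hLV => hP L hL hLc (hLV.trans interior_subset)⟩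
  · -- str1
    rintro U _ y ⟨V, hV, hP⟩
    obtain ⟨K, hK, hKU, hyK⟩ := hP {y} isCompact_singleton (Set.countable_singleton y)
      (Set.singleton_subset_iff.2 (mem_of_mem_nhds hV))
    exact Set.mem_biUnion (show K ∈ {K | K ∈ {K : Set X | IsCompact K} ∧ K ⊆ U} from
      ⟨hK, hKU⟩) (hyK rfl)
  · -- str2
    ext y
    simp only [Set.mem_univ, iff_true]
    refine ⟨Set.univ, Filter.univ_mem, fun L hL hLc _ => ?_⟩
    obtain ⟨K, hK, hLF⟩ := h2 L hL hLc
    exact ⟨K, hK, Set.subset_univ K, hLF⟩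
  · -- str3
    rintro U V _ _ hUV y ⟨Vy, hVy, hP⟩
    refine ⟨Vy, hVy, fun L a b c => ?_⟩
    obtain ⟨K, hK, hKU, hLF⟩ := hP L a b c
    exact ⟨K, hK, hKU.trans hUV, hLF⟩
  · -- str4
    rintro U hU y ⟨V₀, hV₀, hP⟩ W hW hcov
    have hyV : y ∈ interior V₀ := mem_interior_iff_mem_nhds.2 hV₀
    have claim : ∀ L : Set Y, IsCompact L → L.Countable → L ⊆ interior V₀ →
        ∃ K : Set X, IsCompact K ∧ K ⊆ U ∩ ⋃₀ W ∧ L ⊆ F K := by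
      intro L hL hLc hLV
      obtain ⟨K, hK, hKU, hLF⟩ := hP (L ∪ {y}) (hL.union isCompact_singleton)
        (hLc.union (Set.countable_singleton y))
        ((Set.union_subset hLV (Set.singleton_subset_iff.2 hyV)).trans interior_subset)
      have hyFK : y ∈ F K := hLF (Set.mem_union_right _ rfl)
      have hKW : K ⊆ ⋃₀ W :=
        (Set.subset_biUnion_of_mem (show K ∈ {K : Set X | IsCompact K ∧ y ∈ F K ∧ K ⊆ U}
          from ⟨hK, hyFK, hKU⟩)).trans hcov
      exact ⟨K, hK, Set.subset_inter hKU hKW, fun x hx => hLF (Set.mem_union_left _ hx)⟩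
    by_cases hne : (U ∩ ⋃₀ W).Nonempty
    · obtain ⟨E, hE, hEfin, Vy, hVy, hprop⟩ :=
        h3 (U ∩ ⋃₀ W) (interior V₀) (hU.inter (isOpen_sUnion hW)) isOpen_interior
          hne ⟨y, hyV⟩ claim W hW Set.inter_subset_right y hyV
      exact ⟨E, hE, hEfin, Vy, hVy, hprop⟩
    · refine ⟨∅, Set.empty_subset W, Set.finite_empty, ⟨interior V₀,
        interior_mem_nhds.mpr hV₀, fun L hL hLc hLV => ?_⟩⟩
      obtain ⟨K, hK, hKU, hLF⟩ := claim L hL hLc hLV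
      have : U ∩ ⋃₀ W = ∅ := Set.not_nonempty_iff_eq_empty.mp hne
      refine ⟨K, hK, ?_, hLF⟩
      rw [Set.sUnion_empty]
      rw [this] at hKU
      exact hKU
end

section
/- Let X be a sieve-complete space and let F : K(X) → K(Y) be a set tri-quotient map which is upper semicontinuous when K(X) carries the upper Vietoris topology τ⁺_V. Then Y is sieve-complete. -/
open Set Filter Topology

universe u v

universe w



section Konig
variable {A : ℕ → Type u} (π : ∀ n, A (n + 1) → A n)

/-- iterate `π` downward from level `n` to level `k`. -/
def downIter : ∀ n, A n → ∀ k, k ≤ n → A k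
  | 0, a, _, hk => (Nat.le_zero.mp hk) ▸ a
  | n+1, a, k, hk =>
    if h : k ≤ n then downIter n (π n a) k h
    else (Nat.le_antisymm hk (Nat.not_le.mp h)) ▸ a

lemma downIter_self : ∀ n (a : A n) (h : n ≤ n), downIter π n a n h = a
  | 0, a, _ => rfl
  | n+1, a, _ => by
    rw [downIter, dif_neg (Nat.not_succ_le_self n)]

lemma downIter_mem {T : ∀ n, Set (A n)} (hpar : ∀ n b, b ∈ T (n+1) → π n b ∈ T n) :
    ∀ n (a : A n), a ∈ T n → ∀ k (h : k ≤ n), downIter π n a k h ∈ T k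
  | 0, a, ha, k, hk => by
    have : k = 0 := Nat.le_zero.mp hk
    subst this; exact ha
  | n+1, a, ha, k, hk => by
    rw [downIter]
    split
    · exact downIter_mem hpar n (π n a) (hpar n a ha) k ‹_›
    · have : k = n+1 := Nat.le_antisymm hk (Nat.not_le.mp ‹_›)
      subst this; exact ha

lemma downIter_succ : ∀ n (a : A n) k (h : k + 1 ≤ n),
    π k (downIter π n a (k+1) h) = downIter π n a k (Nat.le_of_succ_le h)
  | 0, a, k, h => absurd h (Nat.not_succ_le_zero k)
  | n+1, a, k, h => by
    by_cases h' : k + 1 ≤ n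
    · rw [downIter, dif_pos h', downIter_succ n (π n a) k h']
      rw [downIter, dif_pos (Nat.le_of_succ_le h')]
    · have hk : k = n := by omega
      subst hk
      rw [downIter_self π (k+1) a h]
      rw [show downIter π (k+1) a k (Nat.le_of_succ_le h)
            = downIter π k (π k a) k (Nat.le_refl k) from by
          rw [downIter, dif_pos (Nat.le_refl k)]]
      rw [downIter_self]

lemma downIter_trans : ∀ n (a : A n) m (hmn : m ≤ n) k (hkm : k ≤ m),
    downIter π n a k (hkm.trans hmn) = downIter π m (downIter π n a m hmn) k hkm
  | 0, a, m, hmn, k, hkm => by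
    have hm : m = 0 := Nat.le_zero.mp hmn
    subst hm
    have hk : k = 0 := Nat.le_zero.mp hkm
    subst hk
    rfl
  | n+1, a, m, hmn, k, hkm => by
    by_cases hm : m ≤ n
    · rw [downIter, dif_pos (hkm.trans hm)]
      conv_rhs => rw [downIter, dif_pos hm]
      exact downIter_trans n (π n a) m hm k hkm
    · have : m = n+1 := Nat.le_antisymm hmn (Nat.not_le.mp hm)
      subst this
      rw [downIter_self]

/-- König's lemma for sequences of finite nonempty levels with a parent map. -/
lemma konig (T : ∀ n, Set (A n)) (hne : ∀ n, (T n).Nonempty)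
    (hfin : ∀ n, (T n).Finite) (hpar : ∀ n b, b ∈ T (n+1) → π n b ∈ T n) :
    ∃ α : ∀ n, A n, (∀ n, α n ∈ T n) ∧ ∀ n, π n (α (n + 1)) = α n := by
  classical
  -- descendants persist downward
  have persist : ∀ n (a : A n) m m' (h : n ≤ m) (h' : m ≤ m'),
      (∃ b ∈ T m', ∃ hh : n ≤ m', downIter π m' b n hh = a) →
      ∃ b ∈ T m, downIter π m b n h = a := by
    rintro n a m m' h h' ⟨b, hb, hh, hd⟩
    refine ⟨downIter π m' b m h', downIter_mem π hpar m' b hb m h', ?_⟩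
    rw [← downIter_trans π m' b m h' n h]
    exact hd
  -- Good n a: has descendants at every level
  have exGood : ∀ n (S : Set (A n)), S.Finite → S ⊆ T n →
      (∀ m (h : n ≤ m), ∃ b ∈ T m, downIter π m b n h ∈ S) →
      ∃ a ∈ S, a ∈ T n ∧ ∀ m (h : n ≤ m), ∃ b ∈ T m, downIter π m b n h = a := by
    intro n S hSfin hST hdesc
    by_contra hno
    push_neg at hno
    have hbad : ∀ a ∈ S, ∃ m₀, n ≤ m₀ ∧ ¬ ∃ b ∈ T m₀, ∃ hh : n ≤ m₀, downIter π m₀ b n hh = a := by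
      intro a ha
      obtain ⟨m₀, hm₀n, hm₀⟩ := hno a ha (hST ha)
      refine ⟨m₀, hm₀n, ?_⟩
      rintro ⟨b, hb, hh, hd⟩
      exact hm₀ b hb hd
    choose m₀ hm₀n hm₀ using hbad
    haveI := hSfin.to_subtype
    obtain ⟨M0, hM0⟩ := (Set.finite_range (fun p : S => m₀ p.1 p.2)).bddAbove
    set M := max n M0 with hM
    have hnM : n ≤ M := le_max_left _ _
    obtain ⟨c, hc⟩ := hne M
    have hdm := hdesc M hnM
    obtain ⟨b, hb, hbS⟩ := hdm
    set a := downIter π M b n hnM with ha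
    have haS : a ∈ S := hbS
    -- b witnesses a descendant of a at level M ≥ m₀ a
    have : ∃ bb ∈ T (m₀ a haS), downIter π (m₀ a haS) bb n (hm₀n a haS) = a := by
      apply persist n a (m₀ a haS) M (hm₀n a haS)
      · exact le_trans (hM0 ⟨⟨a, haS⟩, rfl⟩) (le_max_right _ _)
      · exact ⟨b, hb, hnM, rfl⟩
    obtain ⟨bb, hbb, hbd⟩ := this
    exact hm₀ a haS ⟨bb, hbb, hm₀n a haS, hbd⟩
  -- now build the chain by recursion
  -- Goodness predicate
  let Good : ∀ n, A n → Prop := fun n a =>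
    a ∈ T n ∧ ∀ m (h : n ≤ m), ∃ b ∈ T m, downIter π m b n h = a
  have base : ∃ a : A 0, Good 0 a := by
    obtain ⟨a, _, h⟩ := exGood 0 (T 0) (hfin 0) (Set.Subset.rfl) (fun m h => by
      obtain ⟨b, hb⟩ := hne m
      exact ⟨b, hb, downIter_mem π hpar m b hb 0 h⟩)
    exact ⟨a, h⟩
  have step : ∀ n (a : A n), Good n a → ∃ b : A (n+1), π n b = a ∧ Good (n+1) b := by
    intro n a ⟨haT, hdesc⟩
    have : ∃ b ∈ {b ∈ T (n+1) | π n b = a}, Good (n+1) b := by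
      apply exGood (n+1) _ ((hfin (n+1)).subset (sep_subset _ _)) (sep_subset _ _)
      intro m h
      obtain ⟨c, hc, hcd⟩ := hdesc m (le_trans (Nat.le_succ n) h)
      refine ⟨c, hc, downIter_mem π hpar m c hc (n+1) h, ?_⟩
      rw [downIter_succ π m c n h, ← hcd]
    obtain ⟨b, hbmem, hgood⟩ := this
    exact ⟨b, hbmem.2, hgood⟩
  -- recursion
  let rec' : ∀ n, {a : A n // Good n a} := fun n =>
    Nat.rec ⟨Classical.choose base, Classical.choose_spec base⟩
      (fun k ih => ⟨Classical.choose (step k ih.1 ih.2),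
        (Classical.choose_spec (step k ih.1 ih.2)).2⟩) n
  refine ⟨fun n => (rec' n).1, fun n => (rec' n).2.1, fun n => ?_⟩
  exact (Classical.choose_spec (step n (rec' n).1 (rec' n).2)).1

end Konig
section Strong
variable {X : Type u} [TopologicalSpace X] [T35Space X]
variable {A : ℕ → Type u} (U : ∀ n, A n → Set X) (π : ∀ n, A (n + 1) → A n)

/-- invariant for strong chains -/
def SQpred (n : ℕ) (c : (∀ k, k ≤ n → A k) × (ℕ → Set X)) : Prop :=
  (∀ k (h : k + 1 ≤ n), π k (c.1 (k+1) h) = c.1 k ((Nat.le_succ k).trans h)) ∧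
  (∀ k, k ≤ n → IsOpen (c.2 k)) ∧
  closure (c.2 0) ⊆ U 0 (c.1 0 (Nat.zero_le n)) ∧
  (∀ k (h : k + 1 ≤ n), closure (c.2 (k+1)) ⊆ c.2 k ∩ U (k+1) (c.1 (k+1) h)) ∧
  (∀ k, n < k → c.2 k = ∅)

def SA (n : ℕ) : Type u := {c : (∀ k, k ≤ n → A k) × (ℕ → Set X) // SQpred U π n c}

def SU (n : ℕ) (c : SA U π n) : Set X := c.1.2 n

def Sπ (n : ℕ) (c : SA U π (n+1)) : SA U π n :=
  ⟨⟨fun k h => c.1.1 k (h.trans (Nat.le_succ n)), fun k => if k ≤ n then c.1.2 k else ∅⟩, by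
    obtain ⟨h1, h2, h3, h4, h5⟩ := c.2
    refine ⟨fun k h => h1 k (h.trans (Nat.le_succ n)), ?_, ?_, ?_, ?_⟩
    · intro k hk
      simp only [if_pos hk]
      exact h2 k (hk.trans (Nat.le_succ n))
    · simp only [if_pos (Nat.zero_le n)]
      exact h3
    · intro k h
      simp only [if_pos h, if_pos ((Nat.le_succ k).trans h)]
      exact h4 k (h.trans (Nat.le_succ n))
    · intro k hk
      simp only [if_neg (by omega : ¬ k ≤ n)]⟩

lemma SU_subset_U {n : ℕ} (c : SA U π n) : ∀ k (h : k ≤ n), c.1.2 k ⊆ U k (c.1.1 k h) := by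
  intro k h
  match k with
  | 0 => exact subset_closure.trans c.2.2.2.1
  | k+1 => exact subset_closure.trans ((c.2.2.2.2.1 k h).trans (inter_subset_right))

lemma SU_open {n : ℕ} (c : SA U π n) : IsOpen (SU U π n c) := c.2.2.1 n le_rfl

lemma S_strong {n : ℕ} (c : SA U π (n+1)) :
    closure (SU U π (n+1) c) ⊆ SU U π n (Sπ U π n c) := by
  have h := (c.2.2.2.2.1 n le_rfl).trans (inter_subset_left)
  simp only [SU, Sπ, if_pos (le_refl n)]
  exact h

lemma S_subset_parent {n : ℕ} (c : SA U π (n+1)) :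
    SU U π (n+1) c ⊆ SU U π n (Sπ U π n c) :=
  subset_closure.trans (S_strong U π c)

variable (hsieve : IsSieve U π)

/-- extend a chain by one step through a point -/
lemma S_refine (hsieve : IsSieve U π) {n : ℕ} (c : SA U π n) {x : X} (hx : x ∈ SU U π n c) :
    ∃ c' : SA U π (n+1), Sπ U π n c' = c ∧ x ∈ SU U π (n+1) c' := by
  classical
  obtain ⟨hopen, hcover, hrefine⟩ := hsieve
  have hxU : x ∈ U n (c.1.1 n le_rfl) := SU_subset_U U π c n le_rfl hx
  rw [hrefine n (c.1.1 n le_rfl)] at hxU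
  obtain ⟨b, hb, hxb⟩ := mem_iUnion₂.mp hxU
  -- regularity: shrink
  have hnb : (c.1.2 n ∩ U (n+1) b) ∈ 𝓝 x :=
    ((SU_open U π c).inter (hopen (n+1) b)).mem_nhds ⟨hx, hxb⟩
  obtain ⟨t, ht, htc, hts⟩ := exists_mem_nhds_isClosed_subset hnb
  set V := interior t with hV
  have hxV : x ∈ V := mem_interior_iff_mem_nhds.mpr ht
  have hclV : closure V ⊆ c.1.2 n ∩ U (n+1) b :=
    (closure_minimal interior_subset htc).trans hts
  refine ⟨⟨⟨fun k h => if h' : k ≤ n then c.1.1 k h' else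
      (Nat.le_antisymm h (Nat.not_le.mp h')) ▸ b,
      fun k => if k ≤ n then c.1.2 k else if k = n+1 then V else ∅⟩, ?_⟩, ?_, ?_⟩
  · obtain ⟨h1, h2, h3, h4, h5⟩ := c.2
    have hlast : ∀ (h : n+1 ≤ n+1), (if h' : n+1 ≤ n then c.1.1 (n+1) h' else
        (Nat.le_antisymm h (Nat.not_le.mp h')) ▸ b) = b := by
      intro h
      rw [dif_neg (Nat.not_succ_le_self n)]
    refine ⟨?_, ?_, ?_, ?_, ?_⟩
    · intro k h
      by_cases h' : k + 1 ≤ n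
      · simp only [dif_pos h', dif_pos ((Nat.le_succ k).trans h')]
        exact h1 k h'
      · have hk : k = n := by omega
        subst hk
        simp only [hlast h, dif_pos (le_refl k)]
        exact hb
    · intro k hk
      by_cases h' : k ≤ n
      · simp only [if_pos h']
        exact h2 k h'
      · have hk' : k = n + 1 := by omega
        simp only [if_neg h', if_pos hk']
        exact isOpen_interior
    · simp only [if_pos (Nat.zero_le n), dif_pos (Nat.zero_le n)]
      exact h3
    · intro k h
      by_cases h' : k + 1 ≤ n
      · simp only [if_pos h', if_pos ((Nat.le_succ k).trans h'),
          dif_pos h']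
        exact h4 k h'
      · have hk : k = n := by omega
        subst hk
        simp only [if_neg (Nat.not_succ_le_self k), if_pos rfl, if_pos (le_refl k), hlast h]
        exact hclV
    · intro k hk
      simp only [if_neg (by omega : ¬ k ≤ n), if_neg (by omega : ¬ k = n+1)]
  · apply Subtype.ext
    apply Prod.ext
    · funext k h
      simp only [Sπ]
      rw [dif_pos h]
    · funext k
      simp only [Sπ]
      by_cases h' : k ≤ n
      · simp only [if_pos h']
      · simp only [if_neg h']
        exact (c.2.2.2.2.2 k (Nat.not_le.mp h')).symm
  · simp only [SU, if_neg (Nat.not_succ_le_self n), if_pos rfl]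
    exact hxV

lemma S_cover0 (hsieve : IsSieve U π) (x : X) : ∃ c : SA U π 0, x ∈ SU U π 0 c := by
  obtain ⟨hopen, hcover, _⟩ := hsieve
  have : x ∈ ⋃ a : A 0, U 0 a := by rw [hcover 0]; trivial
  obtain ⟨a, ha⟩ := mem_iUnion.mp this
  have hnb : U 0 a ∈ 𝓝 x := (hopen 0 a).mem_nhds ha
  obtain ⟨t, ht, htc, hts⟩ := exists_mem_nhds_isClosed_subset hnb
  refine ⟨⟨⟨fun k h => (Nat.le_zero.mp h) ▸ a,
      fun k => if k = 0 then interior t else ∅⟩, ?_⟩, ?_⟩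
  · refine ⟨fun k h => absurd h (Nat.not_succ_le_zero k), ?_, ?_, fun k h => absurd h (Nat.not_succ_le_zero k), ?_⟩
    · intro k hk
      have : k = 0 := Nat.le_zero.mp hk
      subst this
      simp only [if_pos rfl]
      exact isOpen_interior
    · simp only [if_pos rfl]
      exact (closure_minimal interior_subset htc).trans hts
    · intro k hk
      simp only [if_neg (by omega : ¬ k = 0)]
  · simp only [SU, if_pos rfl]
    exact mem_interior_iff_mem_nhds.mpr ht

lemma S_complete (hcs : IsCompleteSieve U π) :
    ∀ γ : ∀ n, SA U π n, IsPiChain (Sπ U π) γ →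
      ∀ B : Set (Set X), IsFilterBase B →
        (∀ P ∈ B, ∀ n, (P ∩ SU U π n (γ n)).Nonempty) →
        ∃ x : X, ∀ P ∈ B, x ∈ closure P := by
  intro γ hγ B hB hmesh
  set α : ∀ n, A n := fun n => (γ n).1.1 n le_rfl with hα
  have hUsub : ∀ n, SU U π n (γ n) ⊆ U n (α n) := fun n => SU_subset_U U π (γ n) n le_rfl
  have hchain : IsPiChain π α := by
    intro n
    have h1 := (γ (n+1)).2.1 n le_rfl
    have h2 : (Sπ U π n (γ (n+1))).1.1 n le_rfl = (γ n).1.1 n le_rfl := by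
      rw [hγ n]
    have h3 : (Sπ U π n (γ (n+1))).1.1 n le_rfl = (γ (n+1)).1.1 n ((le_refl n).trans (Nat.le_succ n)) := rfl
    exact h1.trans (h3.symm.trans h2)
  exact hcs.2 α hchain B hB (fun P hP n => ((hmesh P hP n).mono (by
    exact inter_subset_inter_right P (hUsub n))))

end Strong
section YSieve
universe u' v'
variable {X : Type u'} {Y : Type v'} [TopologicalSpace X] [TopologicalSpace Y]
variable {A : ℕ → Type u'} (U : ∀ n, A n → Set X) (π : ∀ n, A (n + 1) → A n)
variable (F : Set X → Set Y) (s : Set X → Set Y)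

/-- union of the open sets indexed by a finite set of indices -/
def UE (n : ℕ) (E : Set (A n)) : Set X := ⋃ a ∈ E, U n a

lemma UE_open (hopen : ∀ n a, IsOpen (U n a)) (n : ℕ) (E : Set (A n)) :
    IsOpen (UE U n E) := isOpen_biUnion (fun a _ => hopen n a)

lemma indexify {n : ℕ} (Ew : Set (Set X)) (hfin : Ew.Finite) (C : A n → Prop)
    (h : ∀ w ∈ Ew, ∃ a, C a ∧ U n a = w) :
    ∃ E : Set (A n), E.Finite ∧ (∀ a ∈ E, C a) ∧ UE U n E = ⋃₀ Ew := by
  classical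
  haveI := hfin.to_subtype
  choose g hg1 hg2 using fun w : Ew => h w.1 w.2
  refine ⟨Set.range g, Set.finite_range g, ?_, ?_⟩
  · rintro a ⟨w, rfl⟩
    exact hg1 w
  · ext x
    simp only [UE, Set.mem_iUnion, Set.mem_sUnion, Set.mem_range, exists_prop]
    constructor
    · rintro ⟨a, ⟨w, rfl⟩, hx⟩
      exact ⟨w.1, w.2, (hg2 w) ▸ hx⟩
    · rintro ⟨w, hw, hx⟩
      exact ⟨g ⟨w, hw⟩, ⟨⟨w, hw⟩, rfl⟩, (hg2 ⟨w, hw⟩).symm ▸ hx⟩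

lemma exists_E0
    (hopen : ∀ n a, IsOpen (U n a))
    (hcover0 : ∀ x : X, ∃ a : A 0, x ∈ U 0 a)
    (str2 : s Set.univ = Set.univ)
    (str4 : ∀ U' : Set X, IsOpen U' → ∀ y ∈ s U', ∀ W : Set (Set X), (∀ w ∈ W, IsOpen w) →
      (⋃ K ∈ {K | K ∈ {K : Set X | IsCompact K} ∧ y ∈ F K ∧ K ⊆ U'}, K) ⊆ ⋃₀ W →
      ∃ E : Set (Set X), E ⊆ W ∧ E.Finite ∧ y ∈ s (⋃₀ E))
    (y : Y) : ∃ E : Set (A 0), E.Finite ∧ y ∈ s (UE U 0 E) := by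
  have hy : y ∈ s Set.univ := str2.symm ▸ Set.mem_univ y
  obtain ⟨Ew, hEwW, hEwfin, hys⟩ := str4 Set.univ isOpen_univ y hy
    (Set.range (fun a : A 0 => U 0 a))
    (by rintro w ⟨a, rfl⟩; exact hopen 0 a)
    (by intro x _
        obtain ⟨a, ha⟩ := hcover0 x
        exact ⟨U 0 a, ⟨a, rfl⟩, ha⟩)
  obtain ⟨E, hEfin, _, hEeq⟩ := indexify U Ew hEwfin (fun _ => True)
    (fun w hw => by obtain ⟨a, ha⟩ := hEwW hw; exact ⟨a, trivial, ha⟩)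
  exact ⟨E, hEfin, hEeq ▸ hys⟩

lemma exists_Estep
    (hopen : ∀ n a, IsOpen (U n a))
    (hrefine : ∀ n (a : A n), ∀ x ∈ U n a, ∃ b, π n b = a ∧ x ∈ U (n+1) b)
    (str4 : ∀ U' : Set X, IsOpen U' → ∀ y ∈ s U', ∀ W : Set (Set X), (∀ w ∈ W, IsOpen w) →
      (⋃ K ∈ {K | K ∈ {K : Set X | IsCompact K} ∧ y ∈ F K ∧ K ⊆ U'}, K) ⊆ ⋃₀ W →
      ∃ E : Set (Set X), E ⊆ W ∧ E.Finite ∧ y ∈ s (⋃₀ E))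
    (n : ℕ) (E : Set (A n)) (y : Y) (hy : y ∈ s (UE U n E)) :
    ∃ E' : Set (A (n+1)), E'.Finite ∧ (∀ a ∈ E', π n a ∈ E) ∧ y ∈ s (UE U (n+1) E') := by
  obtain ⟨Ew, hEwW, hEwfin, hys⟩ := str4 (UE U n E) (UE_open U hopen n E) y hy
    {w | ∃ b : A (n+1), π n b ∈ E ∧ U (n+1) b = w}
    (by rintro w ⟨b, _, rfl⟩; exact hopen (n+1) b)
    (by intro x hx
        simp only [Set.mem_iUnion] at hx
        obtain ⟨K, ⟨_, _, hKU⟩, hxK⟩ := hx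
        have hxU : x ∈ UE U n E := hKU hxK
        obtain ⟨a, haE, hxa⟩ := Set.mem_iUnion₂.mp hxU
        obtain ⟨b, hb, hxb⟩ := hrefine n a x hxa
        exact ⟨U (n+1) b, ⟨b, hb ▸ haE, rfl⟩, hxb⟩)
  obtain ⟨E', hE'fin, hE'C, hE'eq⟩ := indexify U Ew hEwfin (fun b => π n b ∈ E)
    (fun w hw => hEwW hw)
  exact ⟨E', hE'fin, hE'C, hE'eq ▸ hys⟩

/-- the index types of the sieve on `Y` -/
def BY (Y : Type v') : ℕ → Type v' := fun n => Nat.rec Y (fun _ t => t × Y) n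

variable (e0 : Y → {E : Set (A 0) // E.Finite})
variable (estep : ∀ n, {E : Set (A n) // E.Finite} → Y → {E : Set (A (n+1)) // E.Finite})

/-- the finite index-set data attached to each node of the sieve on `Y` -/
def nodeE : ∀ n, BY Y n → {E : Set (A n) // E.Finite} :=
  Nat.rec e0 (fun n ih p => estep n (ih p.1) p.2)

/-- the sieve on `Y` -/
def VY (n : ℕ) (b : BY Y n) : Set Y := s (UE U n (nodeE e0 estep n b).1)

section props
variable (hsub : ∀ n (b : A (n+1)), U (n+1) b ⊆ U n (π n b))
variable (hestep1 : ∀ n E y, ∀ a ∈ (estep n E y).1, π n a ∈ E.1)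
variable (hestep2 : ∀ n E y, y ∈ s (UE U n E.1) → y ∈ s (UE U (n+1) (estep n E y).1))
variable (he0 : ∀ y, y ∈ s (UE U 0 (e0 y).1))
variable (str3 : ∀ U' V' : Set X, IsOpen U' → IsOpen V' → U' ⊆ V' → s U' ⊆ s V')
variable (hopen : ∀ n a, IsOpen (U n a))

include hsub hestep1 in
lemma UE_estep_sub (n : ℕ) (E : {E : Set (A n) // E.Finite}) (y : Y) :
    UE U (n+1) (estep n E y).1 ⊆ UE U n E.1 := by
  intro x hx
  obtain ⟨a, ha, hxa⟩ := Set.mem_iUnion₂.mp hx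
  exact Set.mem_iUnion₂.mpr ⟨π n a, hestep1 n E y a ha, hsub n a hxa⟩

include hsub hestep1 hestep2 str3 hopen in
lemma VY_refine (n : ℕ) (b : BY Y n) :
    VY U s e0 estep n b = ⋃ b' ∈ {b' : BY Y (n+1) | (Prod.fst : BY Y (n+1) → BY Y n) b' = b}, VY U s e0 estep (n+1) b' := by
  apply Set.Subset.antisymm
  · intro y hy
    refine Set.mem_iUnion₂.mpr ⟨(b, y), rfl, ?_⟩
    have : VY U s e0 estep (n+1) (b, y) = s (UE U (n+1) (estep n (nodeE e0 estep n b) y).1) := rfl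
    rw [this]
    exact hestep2 n (nodeE e0 estep n b) y hy
  · intro y hy
    obtain ⟨b', hb', hyb'⟩ := Set.mem_iUnion₂.mp hy
    have hb'eq : b' = (b, b'.2) := by
      have : b' = (b'.1, b'.2) := rfl
      rw [this, hb']
      rfl
    rw [hb'eq] at hyb'
    have : VY U s e0 estep (n+1) (b, b'.2) = s (UE U (n+1) (estep n (nodeE e0 estep n b) b'.2).1) := rfl
    replace hyb' : y ∈ s (UE U (n+1) (estep n (nodeE e0 estep n b) b'.2).1) := hyb'
    exact str3 _ _ (UE_open U hopen _ _) (UE_open U hopen _ _)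
      (UE_estep_sub U π estep hsub hestep1 n (nodeE e0 estep n b) b'.2) hyb'

include hsub hestep1 hestep2 str3 hopen he0 in
lemma VY_cover (n : ℕ) : (⋃ b : BY Y n, VY U s e0 estep n b) = Set.univ := by
  induction n with
  | zero =>
    apply Set.eq_univ_of_forall
    intro y
    exact Set.mem_iUnion.mpr ⟨y, he0 y⟩
  | succ n ih =>
    apply Set.eq_univ_of_forall
    intro y
    have : y ∈ ⋃ b : BY Y n, VY U s e0 estep n b := ih ▸ Set.mem_univ y
    obtain ⟨b, hb⟩ := Set.mem_iUnion.mp this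
    rw [VY_refine U π s e0 estep hsub hestep1 hestep2 str3 hopen n b] at hb
    obtain ⟨b', _, hb'⟩ := Set.mem_iUnion₂.mp hb
    exact Set.mem_iUnion.mpr ⟨b', hb'⟩

end props
end YSieve

section Utils
variable {X : Type u} {Y : Type v} [TopologicalSpace X] [TopologicalSpace Y]

lemma filterBase_finite_inter {D : Set (Set Y)} (hD : IsFilterBase D) :
    ∀ S : Set (Set Y), S.Finite → S ⊆ D → ∃ R ∈ D, ∀ P ∈ S, R ⊆ P := by
  intro S hS
  refine Set.Finite.induction_on (motive := fun S' _ => S' ⊆ D → ∃ R ∈ D, ∀ P ∈ S', R ⊆ P) S hS ?_ ?_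
  · intro _
    obtain ⟨P, hP⟩ := hD.1
    exact ⟨P, hP, fun Q hQ => absurd hQ (Set.notMem_empty Q)⟩
  · intro P S' _ _ ih hsub
    obtain ⟨R, hR, hRsub⟩ := ih (fun Q hQ => hsub (Set.mem_insert_of_mem P hQ))
    have hP : P ∈ D := hsub (Set.mem_insert P S')
    obtain ⟨R', hR', hR'sub⟩ := hD.2.2 R hR P hP
    refine ⟨R', hR', ?_⟩
    rintro Q (rfl | hQ)
    · exact hR'sub.trans Set.inter_subset_right
    · exact (hR'sub.trans Set.inter_subset_left).trans (hRsub Q hQ)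

lemma uV_nhds {K : KSet X} {O : Set (KSet X)}
    (hO : O ∈ @nhds (KSet X) (upperVietoris X) K) :
    ∃ W : Set X, IsOpen W ∧ K.1 ⊆ W ∧ ∀ K' : KSet X, K'.1 ⊆ W → K' ∈ O := by
  classical
  letI := upperVietoris X
  have hbasis := TopologicalSpace.isTopologicalBasis_of_subbasis (rfl :
    upperVietoris X = TopologicalSpace.generateFrom _)
  obtain ⟨t, ⟨f, ⟨hffin, hfsub⟩, rfl⟩, hKt, htO⟩ := hbasis.mem_nhds_iff.mp hO
  -- t = ⋂₀ f, each element of f is of the form {K | K.1 ⊆ U}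
  choose gU hgopen hgeq using fun (w : f) => hfsub w.2
  haveI := hffin.to_subtype
  refine ⟨⋂ w : f, gU w, isOpen_iInter_of_finite (fun w => hgopen w), ?_, ?_⟩
  · intro x hx
    refine Set.mem_iInter.mpr (fun w => ?_)
    have hKw : K ∈ w.1 := hKt w.1 w.2
    rw [hgeq w] at hKw
    exact hKw hx
  · intro K' hK'
    apply htO
    intro w hw
    have hweq : w = {K : KSet X | K.1 ⊆ gU ⟨w, hw⟩} := hgeq ⟨w, hw⟩
    rw [hweq]
    intro x hx
    exact Set.mem_iInter.mp (hK' hx) ⟨w, hw⟩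

lemma ultra_base {J : Type w} [Nonempty J] (t : J → Set X)
    (hdir : ∀ i j : J, ∃ k, t k ⊆ t i ∧ t k ⊆ t j)
    (hne : ∀ j, (t j).Nonempty) :
    ∃ 𝔘 : Ultrafilter X, ∀ j, t j ∈ 𝔘 := by
  haveI : Nonempty X := ⟨(hne (Classical.arbitrary J)).choose⟩
  have hdir' : Directed (fun x1 x2 => x1 ≥ x2) (fun j => Filter.principal (t j)) := by
    intro i j
    obtain ⟨k, hki, hkj⟩ := hdir i j
    exact ⟨k, Filter.principal_mono.mpr hki, Filter.principal_mono.mpr hkj⟩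
  haveI hbot : (⨅ j, Filter.principal (t j)).NeBot :=
    iInf_neBot_of_directed hdir' (fun j => Filter.principal_neBot_iff.mpr (hne j))
  refine ⟨Ultrafilter.of (⨅ j, Filter.principal (t j)), fun j => ?_⟩
  exact Ultrafilter.of_le _ (Filter.mem_iInf_of_mem j (Filter.mem_principal_self _))

lemma cluster_of_closure_mem {𝔘 : Ultrafilter X} {x : X}
    (h : ∀ P ∈ 𝔘, x ∈ closure P) : (𝔘 : Filter X) ≤ nhds x := by
  rw [← Ultrafilter.clusterPt_iff]
  rw [clusterPt_iff_nonempty]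
  intro U hU V hV
  exact mem_closure_iff_nhds.mp (h V hV) U hU

lemma ultra_sets_filterBase (𝔘 : Ultrafilter X) : IsFilterBase {P : Set X | P ∈ 𝔘} := by
  refine ⟨⟨Set.univ, Filter.univ_mem⟩, fun P hP => 𝔘.nonempty_of_mem hP,
    fun P hP Q hQ => ⟨P ∩ Q, Filter.inter_mem hP hQ, Set.Subset.rfl⟩⟩

end Utils

/-- Corollary 3.6: if `F : (K(X), τ⁺_V) → K(Y)` is usc and set tri-quotient with `X`
sieve-complete, then `Y` is sieve-complete. -/
theorem stmt15 {X : Type u} {Y : Type v} [TopologicalSpace X] [TopologicalSpace Y]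
    [T35Space X] [T35Space Y]
    (hX : SieveComplete X)
    (F : Set X → Set Y) (hFK : ∀ K : Set X, IsCompact K → IsCompact (F K))
    (husc : ∀ K : KSet X, ∀ V : Set Y, IsOpen V → F K.1 ⊆ V →
      ∃ O ∈ @nhds (KSet X) (upperVietoris X) K, ∀ K' ∈ O, F K'.1 ⊆ V)
    (htq : SetTriQuotient {K : Set X | IsCompact K} F) :
    SieveComplete Y := by
  classical
  obtain ⟨A0, U0, π0, hcs⟩ := hX
  obtain ⟨s, hs_open, hs1, hs2, hs3, hs4⟩ := htq
  -- the strong refinement of the sieve on X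
  set U : ∀ n, SA U0 π0 n → Set X := SU U0 π0 with hUdef
  set π : ∀ n, SA U0 π0 (n+1) → SA U0 π0 n := Sπ U0 π0 with hπdef
  have hopen : ∀ n a, IsOpen (U n a) := fun n a => SU_open U0 π0 a
  have hcover0 : ∀ x : X, ∃ a, x ∈ U 0 a := fun x => S_cover0 U0 π0 hcs.1 x
  have hrefine : ∀ n (a : SA U0 π0 n), ∀ x ∈ U n a, ∃ b, π n b = a ∧ x ∈ U (n+1) b := by
    intro n a x hx
    obtain ⟨c', h1, h2⟩ := S_refine U0 π0 hcs.1 a hx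
    exact ⟨c', h1, h2⟩
  have hsub : ∀ n b, U (n+1) b ⊆ U n (π n b) := fun n b => S_subset_parent U0 π0 b
  have hstrong : ∀ n b, closure (U (n+1) b) ⊆ U n (π n b) := fun n b => S_strong U0 π0 b
  have hcomplete := S_complete U0 π0 hcs
  -- choice functions for the sieve on Y
  have he0' : ∀ y : Y, ∃ E : Set (SA U0 π0 0), E.Finite ∧ y ∈ s (UE U 0 E) :=
    exists_E0 U F s hopen hcover0 hs2 hs4
  choose E0f hE0fin hE0mem using he0'
  set e0 : Y → {E : Set (SA U0 π0 0) // E.Finite} := fun y => ⟨E0f y, hE0fin y⟩ with he0def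
  have hstep' : ∀ n (E : Set (SA U0 π0 n)) (y : Y), ∃ E' : Set (SA U0 π0 (n+1)),
      E'.Finite ∧ (∀ a ∈ E', π n a ∈ E) ∧
      (y ∈ s (UE U n E) → y ∈ s (UE U (n+1) E')) := by
    intro n E y
    by_cases h : y ∈ s (UE U n E)
    · obtain ⟨E', h1, h2, h3⟩ := exists_Estep U π F s hopen hrefine hs4 n E y h
      exact ⟨E', h1, h2, fun _ => h3⟩
    · exact ⟨∅, Set.finite_empty, fun a ha => absurd ha (Set.notMem_empty a),
        fun h' => absurd h' h⟩
  choose Ef hEffin hEfpar hEfmem using hstep'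
  set estep : ∀ n, {E : Set (SA U0 π0 n) // E.Finite} → Y →
      {E : Set (SA U0 π0 (n+1)) // E.Finite} :=
    fun n E y => ⟨Ef n E.1 y, hEffin n E.1 y⟩ with hestepdef
  have hestep1 : ∀ n E y, ∀ a ∈ (estep n E y).1, π n a ∈ E.1 :=
    fun n E y a ha => hEfpar n E.1 y a ha
  have hestep2 : ∀ n E y, y ∈ s (UE U n E.1) → y ∈ s (UE U (n+1) (estep n E y).1) :=
    fun n E y h => hEfmem n E.1 y h
  have he0 : ∀ y, y ∈ s (UE U 0 (e0 y).1) := fun y => hE0mem y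
  -- the sieve on Y
  refine ⟨BY Y, VY U s e0 estep, fun n => Prod.fst, ⟨?_, ?_, ?_⟩, ?_⟩
  · exact fun n b => hs_open _ (UE_open U hopen _ _)
  · exact fun n => VY_cover U π s e0 estep hsub hestep1 hestep2 he0 hs3 hopen n
  · exact fun n b => VY_refine U π s e0 estep hsub hestep1 hestep2 hs3 hopen n b
  -- completeness
  intro β hβ D hD hmesh
  -- the chain of finite index sets
  set E : ∀ m, Set (SA U0 π0 m) := fun m => (nodeE e0 estep m (β m)).1 with hEdef
  have hEfin' : ∀ m, (E m).Finite := fun m => (nodeE e0 estep m (β m)).2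
  have hmesh' : ∀ P ∈ D, ∀ m, (P ∩ s (UE U m (E m))).Nonempty := hmesh
  have hcoh : ∀ m, ∀ a ∈ E (m+1), π m a ∈ E m := by
    intro m a ha
    have h2 : (β (m+1)).1 = β m := hβ m
    have h1 : E (m+1) = (estep m (nodeE e0 estep m (β m)) (β (m+1)).2).1 := by
      rw [hEdef]
      show (estep m (nodeE e0 estep m (β (m+1)).1) (β (m+1)).2).1 = _
      rw [h2]
    rw [h1] at ha
    exact hestep1 m _ _ a ha
  have hUEstep : ∀ m, UE U (m+1) (E (m+1)) ⊆ UE U m (E m) := by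
    intro m x hx
    obtain ⟨a, ha, hxa⟩ := Set.mem_iUnion₂.mp hx
    exact Set.mem_iUnion₂.mpr ⟨π m a, hcoh m a ha, hsub m a hxa⟩
  have hUEmono : ∀ m m', m ≤ m' → UE U m' (E m') ⊆ UE U m (E m) := by
    intro m m' h
    induction m', h using Nat.le_induction with
    | base => exact Set.Subset.rfl
    | succ m' hm ih => exact (hUEstep m').trans ih
  have hUEcl : ∀ m, closure (UE U (m+1) (E (m+1))) ⊆ UE U m (E m) := by
    intro m
    rw [show UE U (m+1) (E (m+1)) = ⋃ a ∈ E (m+1), U (m+1) a from rfl,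
      Finite.closure_biUnion (hEfin' (m+1))]
    intro x hx
    obtain ⟨a, ha, hxa⟩ := Set.mem_iUnion₂.mp hx
    exact Set.mem_iUnion₂.mpr ⟨π m a, hcoh m a ha, hstrong m a hxa⟩
  -- the directed index type
  set J := {P : Set Y // P ∈ D} × ℕ with hJdef
  haveI : Nonempty J := ⟨(⟨hD.1.choose, hD.1.choose_spec⟩, 0)⟩
  set ord : J → J → Prop := fun j j' => j'.1.1 ⊆ j.1.1 ∧ j.2 ≤ j'.2 with horddef
  have hordtrans : ∀ {i j k : J}, ord i j → ord j k → ord i k :=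
    fun h1 h2 => ⟨h2.1.trans h1.1, h1.2.trans h2.2⟩
  have hdirJ : ∀ i j : J, ∃ k, ord i k ∧ ord j k := by
    intro i j
    obtain ⟨R, hR, hRs⟩ := hD.2.2 i.1.1 i.1.2 j.1.1 j.1.2
    exact ⟨(⟨R, hR⟩, max i.2 j.2),
      ⟨hRs.trans Set.inter_subset_left, le_max_left _ _⟩,
      ⟨hRs.trans Set.inter_subset_right, le_max_right _ _⟩⟩
  -- the compact candidates
  set 𝒮 : J → Set (Set X) :=
    fun j => {K | IsCompact K ∧ K ⊆ UE U j.2 (E j.2) ∧ (F K ∩ j.1.1).Nonempty} with h𝒮def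
  have h𝒮ne : ∀ j, (𝒮 j).Nonempty := by
    intro j
    obtain ⟨y, hyP, hys⟩ := hmesh' j.1.1 j.1.2 j.2
    have hy := hs1 (UE U j.2 (E j.2)) (UE_open U hopen _ _) hys
    obtain ⟨K, hK, hyF⟩ := Set.mem_iUnion₂.mp hy
    exact ⟨K, hK.1, hK.2, ⟨y, hyF, hyP⟩⟩
  have h𝒮mono : ∀ {j j'}, ord j j' → 𝒮 j' ⊆ 𝒮 j := by
    rintro j j' ⟨h1, h2⟩ K ⟨hKc, hKsub, hKF⟩
    exact ⟨hKc, hKsub.trans (hUEmono _ _ h2), hKF.mono (Set.inter_subset_inter_right _ h1)⟩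
  set KK : J → Set X := fun j => (h𝒮ne j).choose with hKKdef
  have hKK : ∀ j, KK j ∈ 𝒮 j := fun j => (h𝒮ne j).choose_spec
  set LL : J → Set X := fun j => closure (⋃ j' ∈ {j' | ord j j'}, KK j') with hLLdef
  set Kstar : Set X := ⋂ j, LL j with hKstardef
  have hKstarclosed : IsClosed Kstar := isClosed_iInter (fun j => isClosed_closure)
  have hKKsub : ∀ j, KK j ⊆ UE U j.2 (E j.2) := fun j => (hKK j).2.1
  -- a generic step : from an ultrafilter containing all UE U m (E m), get a cluster point
  have hcluster : ∀ 𝔘 : Ultrafilter X, (∀ m, UE U m (E m) ∈ 𝔘) →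
      ∃ x, ∀ P ∈ 𝔘, x ∈ closure P := by
    intro 𝔘 hUE𝔘
    set T : ∀ m, Set (SA U0 π0 m) := fun m => {a | a ∈ E m ∧ U m a ∈ 𝔘} with hTdef
    have hTne : ∀ m, (T m).Nonempty := by
      intro m
      have := (Ultrafilter.finite_biUnion_mem_iff (hEfin' m)).mp (hUE𝔘 m)
      obtain ⟨a, ha, hU⟩ := this
      exact ⟨a, ha, hU⟩
    have hTfin : ∀ m, (T m).Finite := fun m => (hEfin' m).subset (fun a ha => ha.1)
    have hTpar : ∀ m b, b ∈ T (m+1) → π m b ∈ T m := by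
      rintro m b ⟨hbE, hbU⟩
      exact ⟨hcoh m b hbE, Filter.mem_of_superset hbU (hsub m b)⟩
    obtain ⟨α, hαT, hαchain⟩ := konig π T hTne hTfin hTpar
    exact hcomplete α hαchain {P | P ∈ 𝔘} (ultra_sets_filterBase 𝔘)
      (fun P hP m => 𝔘.nonempty_of_mem (Filter.inter_mem hP (hαT m).2))
  -- (1) Kstar is compact
  have hKstarcpt : IsCompact Kstar := by
    rw [isCompact_iff_ultrafilter_le_nhds]
    intro 𝔙 h𝔙
    have hKmem : Kstar ∈ 𝔙 := Filter.le_principal_iff.mp h𝔙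
    have hLLmem : ∀ j, LL j ∈ 𝔙 :=
      fun j => Filter.mem_of_superset hKmem (Set.iInter_subset _ j)
    have hUE𝔙 : ∀ m, UE U m (E m) ∈ 𝔙 := by
      intro m
      have d0 : {P : Set Y // P ∈ D} := ⟨hD.1.choose, hD.1.choose_spec⟩
      refine Filter.mem_of_superset (hLLmem (d0, m+1)) ?_
      have h1 : (⋃ j' ∈ {j' | ord (d0, m+1) j'}, KK j') ⊆ UE U (m+1) (E (m+1)) := by
        intro x hx
        obtain ⟨j', hj', hxj'⟩ := Set.mem_iUnion₂.mp hx
        exact hUEmono (m+1) j'.2 hj'.2 (hKKsub j' hxj')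
      exact (closure_mono h1).trans (hUEcl m)
    obtain ⟨x, hx⟩ := hcluster 𝔙 hUE𝔙
    refine ⟨x, ?_, cluster_of_closure_mem hx⟩
    have := hx Kstar hKmem
    rwa [hKstarclosed.closure_eq] at this
  -- (2) Kstar attracts the families 𝒮 j
  have hclaim : ∀ W : Set X, IsOpen W → Kstar ⊆ W → ∀ j₀ : J, ∃ K ∈ 𝒮 j₀, K ⊆ W := by
    intro W hW hKW j₀
    by_contra hno
    push_neg at hno
    set t : J → Set X := fun j => ⋃ j' ∈ {j' | ord j j' ∧ ord j₀ j'}, (KK j' \ W) with htdef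
    have htne : ∀ j, (t j).Nonempty := by
      intro j
      obtain ⟨k, hk1, hk2⟩ := hdirJ j j₀
      have hKk : KK k ∈ 𝒮 j₀ := h𝒮mono hk2 (hKK k)
      have : ¬ KK k ⊆ W := by
        intro h
        exact absurd h (hno (KK k) hKk)
      obtain ⟨x, hx1, hx2⟩ := Set.not_subset.mp this
      exact ⟨x, Set.mem_iUnion₂.mpr ⟨k, ⟨hk1, hk2⟩, hx1, hx2⟩⟩
    have htdir : ∀ i j, ∃ k, t k ⊆ t i ∧ t k ⊆ t j := by
      intro i j
      obtain ⟨k, hk1, hk2⟩ := hdirJ i j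
      refine ⟨k, ?_, ?_⟩ <;>
      · intro x hx
        obtain ⟨j', hj', hxj'⟩ := Set.mem_iUnion₂.mp hx
        exact Set.mem_iUnion₂.mpr ⟨j', ⟨hordtrans (by assumption) hj'.1, hj'.2⟩, hxj'⟩
    obtain ⟨𝔘, h𝔘⟩ := ultra_base t htdir htne
    have hUE𝔘 : ∀ m, UE U m (E m) ∈ 𝔘 := by
      intro m
      have d0 : {P : Set Y // P ∈ D} := ⟨hD.1.choose, hD.1.choose_spec⟩
      refine Filter.mem_of_superset (h𝔘 (d0, m)) ?_
      intro x hx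
      obtain ⟨j', hj', hxj'⟩ := Set.mem_iUnion₂.mp hx
      exact hUEmono m j'.2 hj'.1.2 (hKKsub j' hxj'.1)
    obtain ⟨x, hx⟩ := hcluster 𝔘 hUE𝔘
    have hxKstar : x ∈ Kstar := by
      refine Set.mem_iInter.mpr (fun j => ?_)
      have hsub' : t j ⊆ ⋃ j' ∈ {j' | ord j j'}, KK j' := by
        intro z hz
        obtain ⟨j', hj', hzj'⟩ := Set.mem_iUnion₂.mp hz
        exact Set.mem_iUnion₂.mpr ⟨j', hj'.1, hzj'.1⟩
      exact closure_mono hsub' (hx (t j) (h𝔘 j))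
    have hxW : x ∉ W := by
      have hsub' : t j₀ ⊆ Wᶜ := by
        intro z hz
        obtain ⟨j', hj', hzj'⟩ := Set.mem_iUnion₂.mp hz
        exact hzj'.2
      have := hx (t j₀) (h𝔘 j₀)
      have h2 := (closure_mono hsub').trans_eq (hW.isClosed_compl.closure_eq)
      exact h2 this
    exact hxW (hKW hxKstar)
  -- conclude: D clusters
  by_contra hnoclus
  push_neg at hnoclus
  have : ∀ y : Y, ∃ P, P ∈ D ∧ y ∉ closure P := by
    intro y
    obtain ⟨P, hP, hyP⟩ := hnoclus y
    exact ⟨P, hP, hyP⟩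
  choose Pf hPfD hPfnc using this
  have hFcpt : IsCompact (F Kstar) := hFK Kstar hKstarcpt
  obtain ⟨tf, htf⟩ := hFcpt.elim_finite_subcover (fun y => (closure (Pf y))ᶜ)
    (fun y => isClosed_closure.isOpen_compl)
    (fun z hz => Set.mem_iUnion.mpr ⟨z, hPfnc z⟩)
  set VV : Set Y := ⋃ y ∈ tf, (closure (Pf y))ᶜ with hVVdef
  have hVVopen : IsOpen VV := isOpen_biUnion (fun y _ => isClosed_closure.isOpen_compl)
  obtain ⟨R, hRD, hRsub⟩ := filterBase_finite_inter hD ((fun y => Pf y) '' tf)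
    (tf.finite_toSet.image _) (by rintro _ ⟨y, hy, rfl⟩; exact hPfD y)
  have hRV : R ∩ VV = ∅ := by
    by_contra hne
    obtain ⟨r, hrR, hrV⟩ := Set.nonempty_iff_ne_empty.mpr hne
    obtain ⟨y, hy, hry⟩ := Set.mem_iUnion₂.mp hrV
    exact hry (subset_closure (hRsub (Pf y) ⟨y, hy, rfl⟩ hrR))
  obtain ⟨O, hO, hOV⟩ := husc ⟨Kstar, hKstarcpt⟩ VV hVVopen htf
  obtain ⟨W, hWopen, hKstarW, hWO⟩ := uV_nhds hO
  obtain ⟨K, hK𝒮, hKW⟩ := hclaim W hWopen hKstarW (⟨R, hRD⟩, 0)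
  have hFKV : F K ⊆ VV := hOV ⟨K, hK𝒮.1⟩ (hWO ⟨K, hK𝒮.1⟩ hKW)
  obtain ⟨z, hzF, hzR⟩ := hK𝒮.2.2
  have : z ∈ R ∩ VV := ⟨hzR, hFKV hzF⟩
  rw [hRV] at this
  exact this
end

section
/- Let X and Y be arbitrary (completely regular) spaces. If a map F : K(X) → K(Y) satisfies conditions (1), (2) and (3), then F is a monotone set tri-quotient map. -/
open Set Filter Topology

universe u v

/-- Lemma 4.1: for arbitrary spaces `X`, `Y`, any map `F : K(X) → K(Y)` satisfying
(1), (2) and (3) is monotone set tri-quotient. -/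
theorem stmt17 {X : Type u} {Y : Type v} [TopologicalSpace X] [TopologicalSpace Y]
    [T35Space X] [T35Space Y]
    (F : Set X → Set Y) (hFK : ∀ K : Set X, IsCompact K → IsCompact (F K))
    (h1 : CondMonotone F) (h2 : CondCofinal F) (h3 : Cond3 F) :
    CondMonotone F ∧ SetTriQuotient {K : Set X | IsCompact K} F := by
  refine ⟨h1, ?_⟩
  refine ⟨fun U => {y | ∃ V ∈ nhds y, ∀ L : Set Y, IsCompact L → L ⊆ V →
      ∃ K : Set X, IsCompact K ∧ K ⊆ U ∧ L ⊆ F K}, ?_, ?_, ?_, ?_, ?_⟩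
  · -- openness of s U
    intro U _
    rw [isOpen_iff_mem_nhds]
    rintro y ⟨V, hV, hcov⟩
    refine Filter.mem_of_superset (interior_mem_nhds.mpr hV) ?_
    intro y' hy'
    exact ⟨interior V, isOpen_interior.mem_nhds hy',
      fun L hLc hLV => hcov L hLc (hLV.trans interior_subset)⟩
  · -- (str1)
    rintro U _ y ⟨V, hV, hcov⟩
    obtain ⟨K, hKc, hKU, hKF⟩ := hcov {y} isCompact_singleton
      (singleton_subset_iff.mpr (mem_of_mem_nhds hV))
    simp only [mem_iUnion]
    exact ⟨K, ⟨hKc, hKU⟩, hKF rfl⟩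
  · -- (str2)
    refine Set.eq_univ_of_forall fun y => ?_
    exact ⟨Set.univ, Filter.univ_mem, fun L hLc _ => by
      obtain ⟨K, hKc, hKF⟩ := h2 L hLc
      exact ⟨K, hKc, Set.subset_univ K, hKF⟩⟩
  · -- (str3)
    rintro U V _ _ hUV y ⟨V', hV', hcov⟩
    exact ⟨V', hV', fun L hLc hLV => by
      obtain ⟨K, hKc, hKU, hKF⟩ := hcov L hLc hLV
      exact ⟨K, hKc, hKU.trans hUV, hKF⟩⟩
  · -- (str4)
    rintro U hU y ⟨V, hV, hcov⟩ W hW hcovW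
    -- key: every compact L ⊆ V is F-covered by a compact K ⊆ U ∩ ⋃₀ W
    have hT : ∀ L : Set Y, IsCompact L → L ⊆ V →
        ∃ K : Set X, IsCompact K ∧ K ⊆ U ∩ ⋃₀ W ∧ L ⊆ F K := by
      intro L hLc hLV
      obtain ⟨K, hKc, hKU, hKF⟩ := hcov (L ∪ {y}) (hLc.union isCompact_singleton)
        (Set.union_subset hLV (singleton_subset_iff.mpr (mem_of_mem_nhds hV)))
      have hyK : y ∈ F K := hKF (Set.mem_union_right _ rfl)
      have hKW : K ⊆ ⋃₀ W := by
        refine Set.Subset.trans ?_ hcovW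
        intro x hx
        simp only [mem_iUnion]
        exact ⟨K, ⟨hKc, hyK, hKU⟩, hx⟩
      exact ⟨K, hKc, Set.subset_inter hKU hKW,
        fun l hl => hKF (Set.mem_union_left _ hl)⟩
    rcases Set.eq_empty_or_nonempty (U ∩ ⋃₀ W) with hne | hne
    · -- degenerate case: take E = ∅
      refine ⟨∅, Set.empty_subset _, Set.finite_empty, V, hV, ?_⟩
      intro L hLc hLV
      obtain ⟨K, hKc, hKU, hKF⟩ := hT L hLc hLV
      rw [hne] at hKU
      rw [Set.sUnion_empty]
      exact ⟨K, hKc, hKU, hKF⟩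
    · obtain ⟨E, hEW, hEfin, Vy, hVy, hFcov⟩ :=
        h3 (U ∩ ⋃₀ W) (interior V) (hU.inter (isOpen_sUnion hW)) isOpen_interior
          hne ⟨y, mem_interior_iff_mem_nhds.mpr hV⟩
          (fun L hLc hLV => hT L hLc (hLV.trans interior_subset)) W hW
          Set.inter_subset_right y (mem_interior_iff_mem_nhds.mpr hV)
      exact ⟨E, hEW, hEfin, Vy, hVy, fun L hLc hLV => by
        obtain ⟨K, hKc, hKE, hKF⟩ := hFcov L hLc hLV
        exact ⟨K, hKc, hKE, hKF⟩⟩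
end
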